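/- arXiv:1902.09886 — 4 statements merged into one kernel-verified Lean document; each statement's English description precedes it below -/
import Mathlib

section
/- Let E be a uniformly convex Banach space (over ℝ or ℂ) and let F be a closed linear subspace of E. Then the quotient Banach space E/F, equipped with the quotient norm, is uniformly convex. -/
/-- Let `E` be a uniformly convex Banach space (over `ℝ` or `ℂ`) and let
`F` be a closed linear subspace of `E`. Then the quotient Banach space `E ⧸ F`, equipped
with the quotient norm, is uniformly convex. -/
theorem quotient_of_uniformConvex_is_uniformConvex
    {𝕜 : Type*} [RCLike 𝕜] {E : Type*} [NormedAddCommGroup E] [NormedSpace 𝕜 E]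
    [CompleteSpace E] [UniformConvexSpace E]
    (F : Submodule 𝕜 E) (hF : IsClosed (F : Set E)) :
    UniformConvexSpace (E ⧸ F) := by
  letI : NormedSpace ℝ E := NormedSpace.restrictScalars ℝ 𝕜 E
  constructor
  intro ε hε
  obtain ⟨δ, hδ, H⟩ := exists_forall_closed_ball_dist_add_le_two_sub E (half_pos hε)
  set η : ℝ := min 1 (δ / 4) with hη_def
  have hη : 0 < η := lt_min one_pos (by linarith)
  have hη1 : η ≤ 1 := min_le_left _ _
  have hηδ : η ≤ δ / 4 := min_le_right _ _
  refine ⟨δ / 2, by linarith, ?_⟩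
  intro xq hxq yq hyq hxy
  obtain ⟨x, rfl, hx⟩ := Submodule.Quotient.norm_mk_lt xq hη
  obtain ⟨y, rfl, hy⟩ := Submodule.Quotient.norm_mk_lt yq hη
  rw [hxq] at hx
  rw [hyq] at hy
  have hc : (0:ℝ) < 1 + η := by linarith
  have hεle : ε ≤ ‖x - y‖ := by
    calc ε ≤ ‖Submodule.Quotient.mk x - Submodule.Quotient.mk y‖ := hxy
    _ = ‖(Submodule.Quotient.mk (x - y) : E ⧸ F)‖ := by rw [Submodule.Quotient.mk_sub]
    _ ≤ ‖x - y‖ := Submodule.Quotient.norm_mk_le F _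
  have hε2 : ε ≤ 2 := by
    have h2 := norm_sub_le (Submodule.Quotient.mk x : E ⧸ F) (Submodule.Quotient.mk y)
    rw [hxq, hyq] at h2
    linarith
  set c : ℝ := (1 + η)⁻¹ with hc_def
  have hc0 : 0 < c := inv_pos.mpr hc
  have hnx : ‖c • x‖ ≤ 1 := by
    rw [norm_smul, Real.norm_eq_abs, abs_of_pos hc0, hc_def, inv_mul_le_iff₀ hc, mul_one]
    linarith
  have hny : ‖c • y‖ ≤ 1 := by
    rw [norm_smul, Real.norm_eq_abs, abs_of_pos hc0, hc_def, inv_mul_le_iff₀ hc, mul_one]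
    linarith
  have hsub : ε / 2 ≤ ‖c • x - c • y‖ := by
    rw [← smul_sub, norm_smul, Real.norm_eq_abs, abs_of_pos hc0, hc_def,
      le_inv_mul_iff₀ hc]
    nlinarith
  have hadd := H hnx hny hsub
  rw [← smul_add, norm_smul, Real.norm_eq_abs, abs_of_pos hc0, hc_def,
    inv_mul_le_iff₀ hc] at hadd
  calc ‖Submodule.Quotient.mk x + Submodule.Quotient.mk y‖
      = ‖(Submodule.Quotient.mk (x + y) : E ⧸ F)‖ := by rw [Submodule.Quotient.mk_add]
    _ ≤ ‖x + y‖ := Submodule.Quotient.norm_mk_le F _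
    _ ≤ (1 + η) * (2 - δ) := hadd
    _ ≤ 2 - δ / 2 := by nlinarith
end

section
/- Let G be a locally compact Hausdorff topological group, let C be a nonempty subset of G, let E be a complex Banach space such that E or its continuous dual E* is smooth, let π be a representation of G on E (a group homomorphism from G into the invertible linear isometries of E such that g ↦ π(g)ξ is continuous for every ξ ∈ E), and let ξ ∈ E and η ∈ E* satisfy ‖ξ‖·‖η‖ = 1 and η(π(g)ξ) = χ_C(g) for all g ∈ G, where χ_C is the indicator function of C. Then C is a left coset of an open subgroup of G. -/
open Pointwise

/-- A complex normed space `F` is *smooth* if every nonzero `ξ ∈ F` admits a unique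
norming functional: a continuous linear functional `η` with `‖η‖ = 1` and `η ξ = ‖ξ‖`. -/
def IsSmoothNormedSpace (F : Type*) [NormedAddCommGroup F] [NormedSpace ℂ F] : Prop :=
  ∀ ξ : F, ξ ≠ 0 → ∃! η : F →L[ℂ] ℂ, ‖η‖ = 1 ∧ η ξ = (‖ξ‖ : ℂ)

/-!
If `g ∈ C`, then `‖ξ‖ • (η ∘ π g)` is a norming functional of `ξ` and `‖η‖ • π g ξ` is a
norming functional of `η` (as an element of the bidual). Smoothness of `E`, resp. of `E*`,
therefore makes `g ↦ η ∘ π g`, resp. `g ↦ π g ξ`, constant on `C`. Either way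
`a * b⁻¹ * c ∈ C` for all `a b c ∈ C`, and a nonempty set with this property is a left
coset `x • H` of the subgroup `H = x⁻¹ • C`. The set `C` is open because the indicator
function of `C` is a continuous coefficient of `π`.
-/

theorem Set.isOpen_of_continuous_indicator_one {X M₀ : Type*} [TopologicalSpace X]
    [MulZeroOneClass M₀] [Nontrivial M₀] [TopologicalSpace M₀] [T1Space M₀] {C : Set X}
    (hC : Continuous (C.indicator (1 : X → M₀))) : IsOpen C := by
  have hpre : C = C.indicator (1 : X → M₀) ⁻¹' {0}ᶜ := by
    ext x
    simp only [Set.mem_preimage, Set.mem_compl_singleton_iff, ne_eq,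
      Set.indicator_eq_zero_iff_notMem, not_not]
  rw [hpre]
  exact isOpen_compl_singleton.preimage hC

theorem Subgroup.exists_coe_eq_inv_smul_of_mul_inv_mul_mem {G : Type*} [Group G] {C : Set G}
    {x : G} (hx : x ∈ C) (hC : ∀ a ∈ C, ∀ b ∈ C, ∀ c ∈ C, a * b⁻¹ * c ∈ C) :
    ∃ H : Subgroup G, (H : Set G) = x⁻¹ • C := by
  refine ⟨Subgroup.ofDiv (x⁻¹ • C) ⟨1, ?_⟩ ?_, rfl⟩
  · simpa [Set.mem_inv_smul_set_iff] using hx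
  · intro a ha b hb
    rw [Set.mem_inv_smul_set_iff, smul_eq_mul] at ha hb ⊢
    simpa [mul_assoc] using hC _ ha _ hb _ hx

namespace IsSmoothNormedSpace

variable {F : Type*} [NormedAddCommGroup F] [NormedSpace ℂ F]

theorem eq_of_apply_eq_one (hF : IsSmoothNormedSpace F) {x : F} {φ ψ : F →L[ℂ] ℂ}
    (hφ : ‖x‖ * ‖φ‖ = 1) (hψ : ‖x‖ * ‖ψ‖ = 1) (hφx : φ x = 1) (hψx : ψ x = 1) : φ = ψ := by
  have hx : ‖x‖ ≠ 0 := left_ne_zero_of_mul_eq_one hφ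
  have hnorming : ∀ χ : F →L[ℂ] ℂ, ‖x‖ * ‖χ‖ = 1 → χ x = 1 →
      ‖(‖x‖ : ℂ) • χ‖ = 1 ∧ ((‖x‖ : ℂ) • χ) x = (‖x‖ : ℂ) := by
    intro χ hχ hχx
    refine ⟨?_, by simp [hχx]⟩
    rw [norm_smul, Complex.norm_real, norm_norm, hχ]
  obtain ⟨χ₀, -, huniq⟩ := hF x (norm_ne_zero_iff.mp hx)
  have h := (huniq _ (hnorming φ hφ hφx)).trans (huniq _ (hnorming ψ hψ hψx)).symm
  exact smul_right_injective _ (Complex.ofReal_ne_zero.mpr hx) h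

theorem eq_of_dual_apply_eq_one (hF : IsSmoothNormedSpace (F →L[ℂ] ℂ)) {φ : F →L[ℂ] ℂ}
    {x y : F} (hx : ‖x‖ * ‖φ‖ = 1) (hy : ‖y‖ * ‖φ‖ = 1) (hφx : φ x = 1) (hφy : φ y = 1) :
    x = y := by
  let ι := NormedSpace.inclusionInDoubleDualLi (E := F) ℂ
  refine ι.injective (hF.eq_of_apply_eq_one (x := φ) ?_ ?_ hφx hφy) <;>
    rwa [ι.norm_map, mul_comm]

end IsSmoothNormedSpace

section Coefficient

variable {G : Type*} [Group G] {E : Type*} [NormedAddCommGroup E] [NormedSpace ℂ E]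
  (π : G →* (E ≃ₗᵢ[ℂ] E)) {ξ : E} {η : E →L[ℂ] ℂ}

theorem coeff_mul_inv_mul_eq_one_of_isSmoothNormedSpace (hE : IsSmoothNormedSpace E)
    (hnorm : ‖ξ‖ * ‖η‖ = 1) {a b c : G} (ha : η (π a ξ) = 1) (hb : η (π b ξ) = 1)
    (hc : η (π c ξ) = 1) : η (π (a * b⁻¹ * c) ξ) = 1 := by
  have hab : η.comp (π a : E →L[ℂ] E) = η.comp (π b : E →L[ℂ] E) :=
    hE.eq_of_apply_eq_one (by simpa using hnorm) (by simpa using hnorm) ha hb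
  calc η (π (a * b⁻¹ * c) ξ) = η.comp (π a : E →L[ℂ] E) (π b⁻¹ (π c ξ)) := by simp
    _ = η (π c ξ) := by simp [hab]
    _ = 1 := hc

theorem coeff_mul_inv_mul_eq_one_of_isSmoothNormedSpace_dual
    (hE : IsSmoothNormedSpace (E →L[ℂ] ℂ)) (hnorm : ‖ξ‖ * ‖η‖ = 1) {a b c : G}
    (ha : η (π a ξ) = 1) (hb : η (π b ξ) = 1) (hc : η (π c ξ) = 1) :
    η (π (a * b⁻¹ * c) ξ) = 1 := by
  have hbc : π b ξ = π c ξ :=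
    hE.eq_of_dual_apply_eq_one (by simpa using hnorm) (by simpa using hnorm) hb hc
  calc η (π (a * b⁻¹ * c) ξ) = η (π a ((π b)⁻¹ (π c ξ))) := by simp
    _ = 1 := by rw [← hbc, LinearIsometryEquiv.coe_inv, LinearIsometryEquiv.symm_apply_apply, ha]

end Coefficient

theorem coset_of_normalized_indicator_coefficient_general
    {G : Type*} [Group G] [TopologicalSpace G] [IsTopologicalGroup G]
    (C : Set G) (hC : C.Nonempty)
    {E : Type*} [NormedAddCommGroup E] [NormedSpace ℂ E]
    (hsmooth : IsSmoothNormedSpace E ∨ IsSmoothNormedSpace (E →L[ℂ] ℂ))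
    (π : G →* (E ≃ₗᵢ[ℂ] E))
    (hπcont : ∀ v : E, Continuous fun g : G => π g v)
    (ξ : E) (η : E →L[ℂ] ℂ)
    (hnorm : ‖ξ‖ * ‖η‖ = 1)
    (hcoeff : ∀ g : G, η (π g ξ) = Set.indicator C (fun _ => (1 : ℂ)) g) :
    ∃ (G₀ : Subgroup G) (x : G), IsOpen (G₀ : Set G) ∧ C = x • (G₀ : Set G) := by
  have hmem (g : G) : g ∈ C ↔ η (π g ξ) = 1 := by
    rw [hcoeff g]
    exact (Set.indicator_eq_one_iff_mem ℂ).symm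
  have hopen : IsOpen C :=
    Set.isOpen_of_continuous_indicator_one ((continuous_congr hcoeff).mp (by fun_prop))
  have hcoset : ∀ a ∈ C, ∀ b ∈ C, ∀ c ∈ C, a * b⁻¹ * c ∈ C := by
    simp only [hmem]
    intro a ha b hb c hc
    rcases hsmooth with hE | hE
    · exact coeff_mul_inv_mul_eq_one_of_isSmoothNormedSpace π hE hnorm ha hb hc
    · exact coeff_mul_inv_mul_eq_one_of_isSmoothNormedSpace_dual π hE hnorm ha hb hc
  obtain ⟨x, hx⟩ := hC
  obtain ⟨G₀, hG₀⟩ := Subgroup.exists_coe_eq_inv_smul_of_mul_inv_mul_mem hx hcoset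
  refine ⟨G₀, x, hG₀ ▸ hopen.smul x⁻¹, ?_⟩
  rw [hG₀, smul_inv_smul]

/-- Let `G` be a locally compact Hausdorff topological group, `C` a
nonempty subset of `G`, `E` a complex Banach space such that `E` or its dual `E*` is
smooth, `π` a strongly continuous representation of `G` by invertible linear isometries
of `E`, and `ξ ∈ E`, `η ∈ E*` with `‖ξ‖ ⬝ ‖η‖ = 1` and `η (π g ξ) = χ_C g` for all `g`.
Then `C` is a left coset of an open subgroup of `G`. -/
theorem coset_of_normalized_indicator_coefficient
    {G : Type*} [Group G] [TopologicalSpace G] [IsTopologicalGroup G]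
    [LocallyCompactSpace G] [T2Space G]
    (C : Set G) (hC : C.Nonempty)
    {E : Type*} [NormedAddCommGroup E] [NormedSpace ℂ E] [CompleteSpace E]
    (hsmooth : IsSmoothNormedSpace E ∨ IsSmoothNormedSpace (E →L[ℂ] ℂ))
    (π : G →* (E ≃ₗᵢ[ℂ] E))
    (hπcont : ∀ v : E, Continuous fun g : G => π g v)
    (ξ : E) (η : E →L[ℂ] ℂ)
    (hnorm : ‖ξ‖ * ‖η‖ = 1)
    (hcoeff : ∀ g : G, η (π g ξ) = Set.indicator C (fun _ => (1 : ℂ)) g) :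
    ∃ (G₀ : Subgroup G) (x : G), IsOpen (G₀ : Set G) ∧ C = x • (G₀ : Set G) :=
  coset_of_normalized_indicator_coefficient_general C hC hsmooth π hπcont ξ η hnorm hcoeff
end

section
/- Let H and G be locally compact Hausdorff topological groups and let α : H → G be a continuous group homomorphism. Then α is proper (the preimage of every compact subset of G is compact) if and only if the kernel ker α is compact and the induced bijective group homomorphism α̃ : H/ker α → α(H), where α(H) carries the topology induced from G, is an isomorphism of topological groups (a group isomorphism that is also a homeomorphism). -/
/-!
`α` factors as `H → H ⧸ ker α → α(H) ↪ G`. When `ker α` is compact the quotient map is proper,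
and when `α̃` is a homeomorphism `α(H)` is locally compact, hence closed in `G`; so `α` is a
composite of proper maps. Conversely a proper map into a locally compact Hausdorff space is
closed, and closedness of `α` is exactly what makes `α̃⁻¹` continuous.
-/

open Set Topology

-- A weakly locally compact group is complete for its right uniformity, and complete subsets of a
-- separated uniform space are closed.
theorem Subgroup.isClosed_of_weaklyLocallyCompactSpace {G : Type*} [Group G]
    [TopologicalSpace G] [IsTopologicalGroup G] [T0Space G] (S : Subgroup G)
    [WeaklyLocallyCompactSpace S] : IsClosed (S : Set G) := by
  let _ := IsTopologicalGroup.rightUniformSpace G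
  have : IsRightUniformGroup S :=
    { uniformity_eq := by
        rw [uniformity_subtype, uniformity_eq_comap_nhds_one', Filter.comap_comap, nhds_subtype,
          Filter.comap_comap]
        rfl }
  have := IsRightUniformGroup.completeSpace_of_weaklyLocallyCompactSpace (G := S)
  exact (completeSpace_coe_iff_isComplete.mp this).isClosed

theorem QuotientGroup.isProperMap_mk {G : Type*} [Group G] [TopologicalSpace G]
    [IsTopologicalGroup G] {N : Subgroup G} (hN : IsCompact (N : Set G)) :
    IsProperMap (QuotientGroup.mk : G → G ⧸ N) := by
  refine isProperMap_iff_isClosedMap_and_compact_fibers.mpr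
    ⟨continuous_quotient_mk', isClosedMap_coe hN, fun y => ?_⟩
  obtain ⟨g, rfl⟩ := mk_surjective y
  rw [← image_singleton, preimage_image_mk_eq_mul]
  exact isCompact_singleton.mul hN

namespace QuotientGroup

variable {H G : Type*} [Group H] [TopologicalSpace H] [Group G] [TopologicalSpace G]
  {α : H →* G}

theorem continuous_quotientKerEquivRange (hα : Continuous α) :
    Continuous (quotientKerEquivRange α) :=
  continuous_quot_lift _ (hα.subtype_mk _)

theorem continuous_quotientKerEquivRange_symm (hα : IsClosedMap α) :
    Continuous (quotientKerEquivRange α).symm := by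
  refine continuous_iff_isClosed.mpr fun C hC => ?_
  have hC' : IsClosed ((quotientKerEquivRange α ∘ mk) '' (mk ⁻¹' C)) :=
    (hα.codRestrict (s := α.range) fun h => ⟨h, rfl⟩) _ (hC.preimage continuous_quotient_mk')
  rw [image_comp, image_preimage_eq C mk_surjective] at hC'
  exact (quotientKerEquivRange α).toEquiv.image_eq_preimage_symm C ▸ hC'

end QuotientGroup

theorem MonoidHom.isProperMap_of_isCompact_ker {H G : Type*} [Group H] [TopologicalSpace H]
    [IsTopologicalGroup H] [LocallyCompactSpace H] [Group G] [TopologicalSpace G]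
    [IsTopologicalGroup G] [T0Space G] {α : H →* G} (hker : IsCompact (α.ker : Set H))
    (he : Continuous (QuotientGroup.quotientKerEquivRange α))
    (he_symm : Continuous (QuotientGroup.quotientKerEquivRange α).symm) : IsProperMap α := by
  let eₜ : H ⧸ α.ker ≃ₜ α.range := ⟨(QuotientGroup.quotientKerEquivRange α).toEquiv, he, he_symm⟩
  have : WeaklyLocallyCompactSpace α.range := eₜ.symm.isClosedEmbedding.weaklyLocallyCompactSpace
  have hrange : IsClosedEmbedding ((↑) : α.range → G) :=
    α.range.isClosed_of_weaklyLocallyCompactSpace.isClosedEmbedding_subtypeVal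
  exact hrange.isProperMap.comp (eₜ.isProperMap.comp (QuotientGroup.isProperMap_mk hker))

theorem proper_iff_ker_compact_and_quotient_iso_general
    {H G : Type*} [Group H] [TopologicalSpace H] [IsTopologicalGroup H]
    [LocallyCompactSpace H]
    [Group G] [TopologicalSpace G] [IsTopologicalGroup G]
    [LocallyCompactSpace G] [T2Space G]
    (α : H →* G) (hα : Continuous α) :
    (∀ K : Set G, IsCompact K → IsCompact (α ⁻¹' K)) ↔
      (IsCompact (α.ker : Set H) ∧
        Continuous (QuotientGroup.quotientKerEquivRange α) ∧
        Continuous (QuotientGroup.quotientKerEquivRange α).symm) := by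
  have hproper : (∀ K : Set G, IsCompact K → IsCompact (α ⁻¹' K)) ↔ IsProperMap α :=
    (isProperMap_iff_isCompact_preimage.trans (and_iff_right hα)).symm
  rw [hproper]
  constructor
  · intro h
    refine ⟨?_, QuotientGroup.continuous_quotientKerEquivRange hα,
      QuotientGroup.continuous_quotientKerEquivRange_symm h.isClosedMap⟩
    simpa only [MonoidHom.coe_ker] using h.isCompact_preimage isCompact_singleton
  · rintro ⟨hker, he, he_symm⟩
    exact MonoidHom.isProperMap_of_isCompact_ker hker he he_symm

/-- Let `H` and `G` be locally compact Hausdorff topological groups and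
`α : H → G` a continuous group homomorphism.  Then `α` is proper (preimages of compact
sets are compact) if and only if `ker α` is compact and the induced bijective
homomorphism `α̃ : H ⧸ ker α → α(H)` (with `α(H)` carrying the subspace topology) is an
isomorphism of topological groups, i.e. continuous with continuous inverse. -/
theorem proper_iff_ker_compact_and_quotient_iso
    {H G : Type*} [Group H] [TopologicalSpace H] [IsTopologicalGroup H]
    [LocallyCompactSpace H] [T2Space H]
    [Group G] [TopologicalSpace G] [IsTopologicalGroup G]
    [LocallyCompactSpace G] [T2Space G]
    (α : H →* G) (hα : Continuous α) :
    (∀ K : Set G, IsCompact K → IsCompact (α ⁻¹' K)) ↔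
      (IsCompact (α.ker : Set H) ∧
        Continuous (QuotientGroup.quotientKerEquivRange α) ∧
        Continuous (QuotientGroup.quotientKerEquivRange α).symm) :=
  proper_iff_ker_compact_and_quotient_iso_general α hα
end

section
/- Let H and G be topological groups, let H₀ be an open subgroup of H, let y₀ ∈ H and set Y₀ = y₀H₀. For i = 1, …, n let K_i be an open subgroup of H having infinite index in H₀ (i.e., K_i ⊆ H₀ and the index [H₀ : K_i] is infinite) and let Y_i = y_iK_i ⊆ Y₀ be a left coset of K_i contained in Y₀, and set Y = Y₀ \ (Y₁ ∪ ⋯ ∪ Y_n). Let α : Y₀ → G be an affine map (α(x y⁻¹ z) = α(x) α(y)⁻¹ α(z) for all x, y, z ∈ Y₀). If the restriction of α to Y (with the subspace topology) is a proper map, then α : Y₀ → G is a proper map. -/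
/-!
Since each `K i` has infinite index in `H₀`, no finite union of cosets of the `K i` covers
`H₀` (B. H. Neumann), so there are `h₀, …, hₙ ∈ H₀` pairwise incongruent modulo every `K i`.
By pigeonhole, for every `x ∈ Y₀` some `x * hⱼ` avoids all the `Yᵢ`, i.e. lies in `Y`.
Affinity gives `α (x * hⱼ) = α x * cⱼ` for constants `cⱼ`, so `{x ∈ Y₀ | α x ∈ C}` is the
finite union of the right translates by `hⱼ⁻¹` of the compact sets `{x ∈ Y | α x ∈ C * cⱼ}`.
-/

open Pointwise

section

variable {H G : Type*} [Group H] [Group G]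

namespace Subgroup

theorem exists_mem_forall_mk_ne {ι : Type*} [Finite ι] (H₀ : Subgroup H)
    (L : ι → Subgroup H) (hL : ∀ l, (L l).relIndex H₀ = 0) (g : ι → H)
    (hg : ∀ l, g l ∈ H₀) : ∃ h ∈ H₀, ∀ l, (h : H ⧸ L l) ≠ g l := by
  by_contra! hcover
  have := Fintype.ofFinite ι
  have hcover' : ⋃ l ∈ Finset.univ,
      (⟨g l, hg l⟩ : H₀) • (((L l).subgroupOf H₀ : Subgroup H₀) : Set H₀) = Set.univ := by
    refine Set.eq_univ_of_forall fun x => ?_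
    obtain ⟨l, hl⟩ := hcover x x.2
    simp only [Finset.mem_univ, Set.iUnion_true, Set.mem_iUnion]
    exact ⟨l, (mem_leftCoset_iff _).mpr (mem_subgroupOf.mpr (QuotientGroup.eq.mp hl.symm))⟩
  obtain ⟨l, -, hfin⟩ := exists_finiteIndex_of_leftCoset_cover hcover'
  exact hfin.index_ne_zero (hL l)

theorem exists_injective_mk_of_relIndex_eq_zero {ι : Type*} [Finite ι] (H₀ : Subgroup H)
    (K : ι → Subgroup H) (hK : ∀ i, (K i).relIndex H₀ = 0) (m : ℕ) :
    ∃ h : Fin m → H, (∀ j, h j ∈ H₀) ∧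
      ∀ i, Function.Injective fun j => (h j : H ⧸ K i) := by
  induction m with
  | zero => exact ⟨Fin.elim0, fun j => j.elim0, fun _ => Function.injective_of_subsingleton _⟩
  | succ m ih =>
    obtain ⟨h, hH₀, hinj⟩ := ih
    obtain ⟨z, hzH₀, hz⟩ := exists_mem_forall_mk_ne H₀ (fun p : Fin m × ι => K p.2) (hK ·.2)
      (fun p => h p.1) (fun p => hH₀ p.1)
    refine ⟨Fin.cons z h, Fin.cases hzH₀ hH₀, fun i => ?_⟩
    change Function.Injective ((QuotientGroup.mk : H → H ⧸ K i) ∘ Fin.cons z h)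
    rw [Fin.comp_cons, Fin.cons_injective_iff]
    exact ⟨fun ⟨j, hj⟩ => hz (j, i) hj.symm, hinj i⟩

end Subgroup

theorem QuotientGroup.mk_inv_mul_eq_of_mem_leftCoset {K : Subgroup H} {x y a : H}
    (h : x * a ∈ y • (K : Set H)) : ((x⁻¹ * y : H) : H ⧸ K) = a := by
  rw [QuotientGroup.eq, mul_inv_rev, inv_inv, mul_assoc]
  exact (mem_leftCoset_iff y).mp h

theorem exists_mul_notMem_iUnion_leftCoset {ι κ : Type*} [Fintype ι] [Fintype κ]
    (hcard : Fintype.card ι < Fintype.card κ) (K : ι → Subgroup H) (h : κ → H)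
    (hinj : ∀ i, Function.Injective fun j => (h j : H ⧸ K i)) (y : ι → H) (x : H) :
    ∃ j, x * h j ∉ ⋃ i, y i • (K i : Set H) := by
  by_contra! hcover
  choose f hf using fun j => Set.mem_iUnion.mp (hcover j)
  obtain ⟨j, j', hne, hfj⟩ := Fintype.exists_ne_map_eq_of_card_lt f hcard
  have hj' := hf j'
  rw [← hfj] at hj'
  exact hne (hinj (f j) ((QuotientGroup.mk_inv_mul_eq_of_mem_leftCoset (hf j)).symm.trans
    (QuotientGroup.mk_inv_mul_eq_of_mem_leftCoset hj')))

theorem mul_mem_leftCoset {H₀ : Subgroup H} {y₀ x a : H} (hx : x ∈ y₀ • (H₀ : Set H))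
    (ha : a ∈ H₀) : x * a ∈ y₀ • (H₀ : Set H) := by
  obtain ⟨b, hb, rfl⟩ := hx
  simp only [smul_eq_mul, mul_assoc]
  exact mem_leftCoset y₀ (H₀.mul_mem hb ha)

def IsAffineOn (α : H → G) (Y : Set H) : Prop :=
  ∀ x ∈ Y, ∀ u ∈ Y, ∀ z ∈ Y, α (x * u⁻¹ * z) = α x * (α u)⁻¹ * α z

namespace IsAffineOn

variable {α : H → G} {H₀ : Subgroup H} {y₀ : H}

theorem map_mul (hα : IsAffineOn α (y₀ • (H₀ : Set H))) {x a : H}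
    (hx : x ∈ y₀ • (H₀ : Set H)) (ha : a ∈ H₀) :
    α (x * a) = α x * ((α y₀)⁻¹ * α (y₀ * a)) := by
  have hy₀ : y₀ ∈ y₀ • (H₀ : Set H) := by simpa using mem_leftCoset y₀ H₀.one_mem
  rw [← mul_assoc, ← hα x hx y₀ hy₀ _ (mul_mem_leftCoset hy₀ ha), mul_assoc,
    inv_mul_cancel_left]

theorem isCompact_preimage_of_forall_exists_mul_mem [TopologicalSpace H] [ContinuousMul H]
    [TopologicalSpace G] [ContinuousMul G] (hα : IsAffineOn α (y₀ • (H₀ : Set H)))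
    {A : Set H} (hA : A ⊆ y₀ • (H₀ : Set H)) {κ : Type*} [Finite κ] (h : κ → H)
    (hH₀ : ∀ j, h j ∈ H₀) (hcover : ∀ x ∈ y₀ • (H₀ : Set H), ∃ j, x * h j ∈ A)
    (hproper : ∀ C : Set G, IsCompact C → IsCompact {x ∈ A | α x ∈ C})
    {C : Set G} (hC : IsCompact C) : IsCompact {x ∈ y₀ • (H₀ : Set H) | α x ∈ C} := by
  set c : κ → G := fun j => (α y₀)⁻¹ * α (y₀ * h j)
  have hunion : {x ∈ y₀ • (H₀ : Set H) | α x ∈ C} =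
      ⋃ j, (· * (h j)⁻¹) '' {x ∈ A | α x ∈ (· * c j) '' C} := by
    ext x
    simp only [Set.mem_iUnion, Set.mem_image, Set.mem_ofPred_eq]
    constructor
    · rintro ⟨hx, hxC⟩
      obtain ⟨j, hj⟩ := hcover x hx
      exact ⟨j, x * h j, ⟨hj, α x, hxC, (hα.map_mul hx (hH₀ j)).symm⟩, mul_inv_cancel_right x _⟩
    · rintro ⟨j, b, ⟨hb, g, hg, hgb⟩, rfl⟩
      have hx := mul_mem_leftCoset (hA hb) (H₀.inv_mem (hH₀ j))
      refine ⟨hx, ?_⟩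
      have := hα.map_mul hx (hH₀ j)
      rw [inv_mul_cancel_right, ← hgb] at this
      rwa [← mul_right_cancel this]
  rw [hunion]
  exact isCompact_iUnion fun j =>
    (hproper _ (hC.image (continuous_mul_const (c j)))).image (continuous_mul_const _)

end IsAffineOn

end

theorem affine_proper_of_proper_on_coset_ring_set_general
    {H G : Type*} [Group H] [TopologicalSpace H] [IsTopologicalGroup H]
    [Group G] [TopologicalSpace G] [IsTopologicalGroup G]
    (H₀ : Subgroup H) (y₀ : H)
    (n : ℕ) (K : Fin n → Subgroup H) (y : Fin n → H)
    (hKinf : ∀ i, (K i).relIndex H₀ = 0)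
    (α : H → G)
    (haff : ∀ x ∈ y₀ • (H₀ : Set H), ∀ u ∈ y₀ • (H₀ : Set H), ∀ z ∈ y₀ • (H₀ : Set H),
      α (x * u⁻¹ * z) = α x * (α u)⁻¹ * α z)
    (hproperY : ∀ C : Set G, IsCompact C →
      IsCompact {x ∈ (y₀ • (H₀ : Set H)) \ (⋃ i, y i • (K i : Set H)) | α x ∈ C}) :
    ∀ C : Set G, IsCompact C → IsCompact {x ∈ y₀ • (H₀ : Set H) | α x ∈ C} := by
  obtain ⟨h, hH₀, hinj⟩ := H₀.exists_injective_mk_of_relIndex_eq_zero K hKinf (n + 1)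
  intro C hC
  refine IsAffineOn.isCompact_preimage_of_forall_exists_mul_mem haff Set.sdiff_subset h hH₀
    (fun x hx => ?_) hproperY hC
  obtain ⟨j, hj⟩ := exists_mul_notMem_iUnion_leftCoset (by simp) K h hinj y x
  exact ⟨j, mul_mem_leftCoset hx (hH₀ j), hj⟩

/-- Let `H` and `G` be topological groups, `H₀` an open subgroup of
`H`, `y₀ ∈ H`, `Y₀ = y₀H₀`.  For `i = 1, …, n` let `K i` be an open subgroup of `H` of
infinite index in `H₀` (i.e. `K i ≤ H₀` and the index `[H₀ : K i]` is infinite) and let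
`Y i = yᵢ • K i ⊆ Y₀` be a left coset of `K i` contained in `Y₀`; set
`Y = Y₀ \ (Y 1 ∪ ⋯ ∪ Y n)`.  Let `α : Y₀ → G` be an affine map.  If the restriction of
`α` to `Y` is proper, then `α : Y₀ → G` is proper.  (Properness of a map on a subset
`A ⊆ H`, with the subspace topology, is expressed intrinsically: the set
`{x ∈ A | α x ∈ K}` is compact for every compact `K ⊆ G`; infinite index is expressed
by `(K i).relindex H₀ = 0`.) -/
theorem affine_proper_of_proper_on_coset_ring_set
    {H G : Type*} [Group H] [TopologicalSpace H] [IsTopologicalGroup H]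
    [Group G] [TopologicalSpace G] [IsTopologicalGroup G]
    (H₀ : Subgroup H) (hH₀ : IsOpen (H₀ : Set H)) (y₀ : H)
    (n : ℕ) (K : Fin n → Subgroup H) (y : Fin n → H)
    (hKopen : ∀ i, IsOpen (K i : Set H))
    (hKle : ∀ i, K i ≤ H₀)
    (hKinf : ∀ i, (K i).relIndex H₀ = 0)
    (hYsub : ∀ i, y i • (K i : Set H) ⊆ y₀ • (H₀ : Set H))
    (α : H → G)
    (haff : ∀ x ∈ y₀ • (H₀ : Set H), ∀ u ∈ y₀ • (H₀ : Set H), ∀ z ∈ y₀ • (H₀ : Set H),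
      α (x * u⁻¹ * z) = α x * (α u)⁻¹ * α z)
    (hproperY : ∀ C : Set G, IsCompact C →
      IsCompact {x ∈ (y₀ • (H₀ : Set H)) \ (⋃ i, y i • (K i : Set H)) | α x ∈ C}) :
    ∀ C : Set G, IsCompact C → IsCompact {x ∈ y₀ • (H₀ : Set H) | α x ∈ C} :=
  affine_proper_of_proper_on_coset_ring_set_general H₀ y₀ n K y hKinf α haff hproperY
end
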